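/- arXiv:2410.09938 — 2 statements merged into one kernel-verified Lean document; each statement's English description precedes it below -/
import Mathlib

section
/- Let A be a real m × n matrix with m > n, let E be a real m × n matrix, and set Ã = A + E. If A is singular (i.e., σ_n(A) = 0) and ‖E‖_F < σ_1(A), then ρ(Ã) ≤ ‖E‖_F / (σ_1(A) − ‖E‖_F). -/
open Finset

/-- Frobenius norm of a real matrix: `‖A‖_F = (Σ_{i,j} A_{ij}²)^{1/2}`. -/
noncomputable def frobNorm {m n : ℕ} (A : Matrix (Fin m) (Fin n) ℝ) : ℝ :=
  Real.sqrt (∑ i, ∑ j, (A i j) ^ 2)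

theorem Matrix.isHermitian_transpose_mul_self {m n α : Type*} [Fintype m] [NonUnitalSemiring α]
    [StarRing α] [TrivialStar α] (A : Matrix m n α) : (A.transpose * A).IsHermitian := by
  rw [← Matrix.conjTranspose_eq_transpose_of_trivial]
  exact Matrix.isHermitian_conjTranspose_mul_self A

/-- The `k`-th singular value (`k : Fin n`, 0-indexed, in decreasing order):
the square root of the `k`-th largest eigenvalue of `Aᵀ * A`. -/
noncomputable def singularValue {m n : ℕ} (A : Matrix (Fin m) (Fin n) ℝ) (k : Fin n) : ℝ :=
  Real.sqrt ((Matrix.isHermitian_transpose_mul_self A).eigenvalues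
    (Tuple.sort (Matrix.isHermitian_transpose_mul_self A).eigenvalues (Fin.rev k)))

/-- Reciprocal condition number `ρ(A) = σ_n(A) / σ_1(A)`. -/
noncomputable def rho {m n : ℕ} (hn : 0 < n) (A : Matrix (Fin m) (Fin n) ℝ) : ℝ :=
  singularValue A ⟨n - 1, by omega⟩ / singularValue A ⟨0, hn⟩

section Aux

open Matrix

lemma aux_dotProduct_self_nonneg {k : ℕ} (x : Fin k → ℝ) : 0 ≤ x ⬝ᵥ x :=
  Finset.sum_nonneg fun i _ => mul_self_nonneg _

lemma aux_dot_CS {k : ℕ} (x y : Fin k → ℝ) : (x ⬝ᵥ y)^2 ≤ (x ⬝ᵥ x) * (y ⬝ᵥ y) := by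
  have := Finset.sum_mul_sq_le_sq_mul_sq Finset.univ x y
  simpa [dotProduct, pow_two] using this

lemma rayleigh_expand {n : ℕ} {H : Matrix (Fin n) (Fin n) ℝ} (hH : H.IsHermitian) (x : Fin n → ℝ) :
    ∃ d : Fin n → ℝ, x ⬝ᵥ x = ∑ i, d i ^ 2 ∧
      x ⬝ᵥ (H *ᵥ x) = ∑ i, hH.eigenvalues i * d i ^ 2 := by
  classical
  set b := hH.eigenvectorBasis with hb
  set y : EuclideanSpace ℝ (Fin n) := WithLp.toLp 2 x with hy
  set d : Fin n → ℝ := fun i => b.repr y i with hd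
  have hxj : ∀ j, x j = ∑ i, d i * b i j := by
    intro j
    have := congrArg (EuclideanSpace.proj (𝕜 := ℝ) j) (b.sum_repr y)
    rw [map_sum] at this
    simp only [PiLp.proj_apply, _root_.map_smul, smul_eq_mul] at this
    exact this.symm
  have hdix : ∀ i, (⇑(b i)) ⬝ᵥ x = d i := by
    intro i
    rw [hd]
    simp only [b.repr_apply_apply y i]
    simp [dotProduct, PiLp.inner_apply, RCLike.inner_apply, hy]
    exact Finset.sum_congr rfl fun j _ => mul_comm _ _
  have key : ∀ v : Fin n → ℝ, x ⬝ᵥ v = ∑ i, d i * ((⇑(b i)) ⬝ᵥ v) := by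
    intro v
    simp only [dotProduct, Finset.mul_sum]
    rw [Finset.sum_comm]
    refine Finset.sum_congr rfl fun j _ => ?_
    rw [hxj j, Finset.sum_mul]
    simp [mul_assoc]
  have hbH : ∀ i, (⇑(b i)) ⬝ᵥ (H *ᵥ x) = hH.eigenvalues i * ((⇑(b i)) ⬝ᵥ x) := by
    intro i
    rw [Matrix.dotProduct_mulVec]
    have hHt : Hᵀ = H := by
      have : Hᴴ = Hᵀ := by ext i j; simp [Matrix.conjTranspose_apply]
      rw [← this]; exact hH
    have hv : Matrix.vecMul (⇑(b i)) H = hH.eigenvalues i • ⇑(b i) := by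
      rw [← Matrix.mulVec_transpose, hHt]
      exact hH.mulVec_eigenvectorBasis i
    rw [hv, smul_dotProduct, smul_eq_mul]
  refine ⟨d, ?_, ?_⟩
  · rw [key x]
    exact Finset.sum_congr rfl fun i _ => by rw [hdix i]; ring
  · rw [key (H *ᵥ x)]
    exact Finset.sum_congr rfl fun i _ => by rw [hbH i, hdix i]; ring

lemma rayleigh_le {n : ℕ} {H : Matrix (Fin n) (Fin n) ℝ} (hH : H.IsHermitian) (x : Fin n → ℝ)
    {c : ℝ} (hc : ∀ i, hH.eigenvalues i ≤ c) : x ⬝ᵥ (H *ᵥ x) ≤ c * (x ⬝ᵥ x) := by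
  obtain ⟨d, hd1, hd2⟩ := rayleigh_expand hH x
  rw [hd1, hd2, Finset.mul_sum]
  exact Finset.sum_le_sum fun i _ => mul_le_mul_of_nonneg_right (hc i) (sq_nonneg _)

lemma rayleigh_ge {n : ℕ} {H : Matrix (Fin n) (Fin n) ℝ} (hH : H.IsHermitian) (x : Fin n → ℝ)
    {c : ℝ} (hc : ∀ i, c ≤ hH.eigenvalues i) : c * (x ⬝ᵥ x) ≤ x ⬝ᵥ (H *ᵥ x) := by
  obtain ⟨d, hd1, hd2⟩ := rayleigh_expand hH x
  rw [hd1, hd2, Finset.mul_sum]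
  exact Finset.sum_le_sum fun i _ => mul_le_mul_of_nonneg_right (hc i) (sq_nonneg _)

lemma sort_min_le {n : ℕ} (f : Fin n → ℝ) (hn : 0 < n) (i : Fin n) :
    f (Tuple.sort f ⟨0, hn⟩) ≤ f i := by
  have h := Tuple.monotone_sort f (a := ⟨0, hn⟩) (b := (Tuple.sort f).symm i)
    (by simp [Fin.le_def])
  simpa using h

lemma le_sort_max {n : ℕ} (f : Fin n → ℝ) (hn : 0 < n) (i : Fin n) :
    f i ≤ f (Tuple.sort f ⟨n - 1, by omega⟩) := by
  have h := Tuple.monotone_sort f (a := (Tuple.sort f).symm i) (b := ⟨n - 1, by omega⟩)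
    (by have := ((Tuple.sort f).symm i).isLt; simp [Fin.le_def]; omega)
  simpa using h

lemma frob_mulVec {m n : ℕ} (E : Matrix (Fin m) (Fin n) ℝ) (x : Fin n → ℝ) :
    (E *ᵥ x) ⬝ᵥ (E *ᵥ x) ≤ (frobNorm E)^2 * (x ⬝ᵥ x) := by
  have h1 : (frobNorm E)^2 = ∑ i, ∑ j, E i j ^ 2 := Real.sq_sqrt (by positivity)
  rw [h1, Finset.sum_mul]
  simp only [dotProduct, Matrix.mulVec]
  refine Finset.sum_le_sum fun i _ => ?_
  have := Finset.sum_mul_sq_le_sq_mul_sq Finset.univ (fun j => E i j) x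
  calc (E i ⬝ᵥ x) * (E i ⬝ᵥ x) = (∑ j, E i j * x j)^2 := by rw [pow_two]; rfl
    _ ≤ (∑ j, E i j ^ 2) * (∑ j, x j ^ 2) := this
    _ = (∑ j, E i j ^ 2) * (∑ j, x j * x j) := by simp [pow_two]

lemma dot_conj {m n : ℕ} (A : Matrix (Fin m) (Fin n) ℝ) (x : Fin n → ℝ) :
    x ⬝ᵥ ((Aᴴ * A) *ᵥ x) = (A *ᵥ x) ⬝ᵥ (A *ᵥ x) := by
  rw [← Matrix.mulVec_mulVec, Matrix.dotProduct_mulVec, Matrix.vecMul_conjTranspose]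
  simp

lemma unit_eigvec {n : ℕ} {H : Matrix (Fin n) (Fin n) ℝ} (hH : H.IsHermitian) (i : Fin n) :
    (⇑(hH.eigenvectorBasis i)) ⬝ᵥ (⇑(hH.eigenvectorBasis i)) = 1 := by
  have hnorm : ‖hH.eigenvectorBasis i‖ = 1 := hH.eigenvectorBasis.orthonormal.1 i
  have h := real_inner_self_eq_norm_sq (hH.eigenvectorBasis i)
  rw [hnorm] at h
  rw [one_pow] at h
  rw [← h, PiLp.inner_apply]
  exact Finset.sum_congr rfl fun j _ => by simp [pow_two]


lemma sv_sq {m n : ℕ} (M : Matrix (Fin m) (Fin n) ℝ) (k : Fin n) :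
    singularValue M k ^ 2 = (Matrix.isHermitian_transpose_mul_self M).eigenvalues
      (Tuple.sort (Matrix.isHermitian_transpose_mul_self M).eigenvalues (Fin.rev k)) :=
  Real.sq_sqrt (Matrix.eigenvalues_conjTranspose_mul_self_nonneg M _)

lemma sv_nonneg {m n : ℕ} (M : Matrix (Fin m) (Fin n) ℝ) (k : Fin n) :
    0 ≤ singularValue M k := Real.sqrt_nonneg _

lemma rev_zero' {n : ℕ} (hn : 0 < n) : Fin.rev (⟨0, hn⟩ : Fin n) = ⟨n - 1, by omega⟩ := by
  ext; simp [Fin.rev]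

lemma rev_last' {n : ℕ} (hn : 0 < n) : Fin.rev (⟨n - 1, by omega⟩ : Fin n) = ⟨0, hn⟩ := by
  ext; simp [Fin.rev]; omega

lemma mulVec_dot_le {m n : ℕ} (hn : 0 < n) (M : Matrix (Fin m) (Fin n) ℝ) (x : Fin n → ℝ) :
    (M *ᵥ x) ⬝ᵥ (M *ᵥ x) ≤ singularValue M ⟨0, hn⟩ ^ 2 * (x ⬝ᵥ x) := by
  rw [← dot_conj, sv_sq, rev_zero' hn]
  exact rayleigh_le _ x (fun i => le_sort_max _ hn i)

lemma sv_min_le_mulVec_dot {m n : ℕ} (hn : 0 < n) (M : Matrix (Fin m) (Fin n) ℝ)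
    (x : Fin n → ℝ) :
    singularValue M ⟨n - 1, by omega⟩ ^ 2 * (x ⬝ᵥ x) ≤ (M *ᵥ x) ⬝ᵥ (M *ᵥ x) := by
  rw [← dot_conj, sv_sq, rev_last' hn]
  exact rayleigh_ge _ x (fun i => sort_min_le _ hn i)

lemma exists_unit_sv {m n : ℕ} (M : Matrix (Fin m) (Fin n) ℝ) (k : Fin n) :
    ∃ u : Fin n → ℝ, u ⬝ᵥ u = 1 ∧ (M *ᵥ u) ⬝ᵥ (M *ᵥ u) = singularValue M k ^ 2 := by
  classical
  set hH := Matrix.isHermitian_transpose_mul_self M with hh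
  refine ⟨⇑(hH.eigenvectorBasis (Tuple.sort hH.eigenvalues (Fin.rev k))), unit_eigvec _ _, ?_⟩
  rw [← dot_conj, sv_sq]
  rw [Matrix.conjTranspose_eq_transpose_of_trivial, hH.mulVec_eigenvectorBasis (Tuple.sort hH.eigenvalues (Fin.rev k)),
    dotProduct_smul, smul_eq_mul, unit_eigvec hH _, mul_one]

end Aux

open Matrix

/-- If `A` (with `m > n`) is singular, i.e. `σ_n(A) = 0`, and `‖E‖_F < σ_1(A)`, then
`ρ(A + E) ≤ ‖E‖_F / (σ_1(A) − ‖E‖_F)`. -/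
theorem rho_upper_bound_of_singular (m n : ℕ) (hmn : n < m) (hn : 0 < n)
    (A E : Matrix (Fin m) (Fin n) ℝ)
    (hsing : singularValue A ⟨n - 1, by omega⟩ = 0)
    (hlt : frobNorm E < singularValue A ⟨0, hn⟩) :
    rho hn (A + E) ≤ frobNorm E / (singularValue A ⟨0, hn⟩ - frobNorm E) := by
  classical
  set F := frobNorm E with hFdef
  have hF0 : 0 ≤ F := Real.sqrt_nonneg _
  set s1 := singularValue A ⟨0, hn⟩ with hs1def
  have hsF : 0 < s1 - F := by linarith
  have hs10 : 0 ≤ s1 := sv_nonneg _ _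
  -- unit vector killed by A
  obtain ⟨v, hv1, hv2⟩ := exists_unit_sv A ⟨n - 1, by omega⟩
  rw [hsing] at hv2
  have hAv : A *ᵥ v = 0 := by
    have h1 : (A *ᵥ v) ⬝ᵥ (A *ᵥ v) = 0 := by rw [hv2]; ring
    funext i
    have h3 := (Finset.sum_eq_zero_iff_of_nonneg
      (fun j (_ : j ∈ Finset.univ) => mul_self_nonneg ((A *ᵥ v) j))).mp h1 i (Finset.mem_univ i)
    exact mul_self_eq_zero.mp h3
  -- unit vector attaining sigma_1(A)
  obtain ⟨u, hu1, hu2⟩ := exists_unit_sv A ⟨0, hn⟩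
  -- smallest singular value of A + E is at most F
  have hsnF : singularValue (A + E) ⟨n - 1, by omega⟩ ≤ F := by
    have h1 := sv_min_le_mulVec_dot hn (A + E) v
    rw [hv1, mul_one, Matrix.add_mulVec, hAv, zero_add] at h1
    have h2 := frob_mulVec E v
    rw [hv1, mul_one] at h2
    have h3 := sv_nonneg (A + E) (⟨n - 1, by omega⟩ : Fin n)
    nlinarith
  -- largest singular value of A + E is at least s1 - F
  have hs1T : s1 - F ≤ singularValue (A + E) ⟨0, hn⟩ := by
    have h1 := mulVec_dot_le hn (A + E) u
    rw [hu1, mul_one, Matrix.add_mulVec] at h1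
    set a := A *ᵥ u with ha
    set e := E *ᵥ u with he
    have haa : a ⬝ᵥ a = s1 ^ 2 := hu2
    have hee : e ⬝ᵥ e ≤ F ^ 2 := by
      have h2 := frob_mulVec E u
      rwa [hu1, mul_one] at h2
    have hexp : (a + e) ⬝ᵥ (a + e) = a ⬝ᵥ a + 2 * (a ⬝ᵥ e) + e ⬝ᵥ e := by
      rw [add_dotProduct, dotProduct_add, dotProduct_add,
        dotProduct_comm e a]
      ring
    set r := Real.sqrt (e ⬝ᵥ e) with hrdef
    have hr0 : 0 ≤ r := Real.sqrt_nonneg _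
    have hr2 : r ^ 2 = e ⬝ᵥ e := Real.sq_sqrt (aux_dotProduct_self_nonneg e)
    have hrF : r ≤ F := by
      nlinarith [hr2, hee]
    have hcs : (a ⬝ᵥ e) ^ 2 ≤ s1 ^ 2 * r ^ 2 := by
      have h4 := aux_dot_CS a e
      rw [haa, ← hr2] at h4
      exact h4
    have hte : -(s1 * r) ≤ a ⬝ᵥ e := by nlinarith [sq_nonneg (a ⬝ᵥ e + s1 * r), mul_nonneg hs10 hr0, hcs]
    have hT0 := sv_nonneg (A + E) (⟨0, hn⟩ : Fin n)
    nlinarith [h1, hexp, mul_nonneg (sub_nonneg.mpr hrF) (by linarith : (0:ℝ) ≤ 2 * s1 - F - r)]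
  rw [rho]
  exact div_le_div₀ hF0 hsnF hsF hs1T
end

section
/- Let n ∈ ℕ be even and positive, x_0 ∈ ℝ, h > 0, and x_k = x_0 + k·h for k = 0, ..., n. Let u : ℝ → ℝ be (n+1) times continuously differentiable with ‖u^{(n+1)}‖_∞ ≤ C_u. Then the central finite-difference approximation of the first derivative satisfies |u'(x_{n/2}) − p_n'(u, x_{n/2})| ≤ h^n · C_u · ((n/2)!)² / (n+1)!. -/
open Finset

/-- The `k`-th Lagrange basis polynomial `L_{n,k}` for the equispaced nodes
`x_i = x₀ + i·h`, `i = 0, …, n`:  `L_{n,k}(x) = Π_{i ≠ k} (x − x_i)/(x_k − x_i)`. -/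
noncomputable def lagrangeBasis (n : ℕ) (x₀ h : ℝ) (k : ℕ) (x : ℝ) : ℝ :=
  ∏ i ∈ (Finset.range (n + 1)).erase k,
    (x - (x₀ + (i : ℝ) * h)) / ((x₀ + (k : ℝ) * h) - (x₀ + (i : ℝ) * h))

/-- The Lagrange interpolating polynomial `p_n(f, x) = Σ_{k=0}^{n} f(x_k) · L_{n,k}(x)`
of `f` at the equispaced nodes `x_k = x₀ + k·h`. -/
noncomputable def lagrangeInterp (n : ℕ) (x₀ h : ℝ) (f : ℝ → ℝ) (x : ℝ) : ℝ :=
  ∑ k ∈ Finset.range (n + 1), f (x₀ + (k : ℝ) * h) * lagrangeBasis n x₀ h k x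

section Helpers

open Polynomial

lemma contDiff_polyeval (p : ℝ[X]) (k : ℕ∞) : ContDiff ℝ k (fun x => p.eval x) := by
  have h : (fun x : ℝ => p.eval x)
      = fun x => ∑ i ∈ range (p.natDegree + 1), p.coeff i * x ^ i :=
    funext fun x => eval_eq_sum_range x
  rw [h]
  exact ContDiff.sum fun i _ => contDiff_const.mul (contDiff_id.pow i)

lemma iterate_derivative_add' (p q : ℝ[X]) (k : ℕ) :
    Polynomial.derivative^[k] (p + q)
      = Polynomial.derivative^[k] p + Polynomial.derivative^[k] q := by
  induction k with
  | zero => simp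
  | succ k ih => simp [Function.iterate_succ_apply', ih]

lemma iterate_derivative_monic_top (W : ℝ[X]) (n : ℕ) (hm : W.Monic)
    (hd : W.natDegree = n + 1) :
    Polynomial.derivative^[n+1] W = C ((n+1).factorial : ℝ) := by
  have hW : W = X ^ (n+1) + (W - X ^ (n+1)) := by ring
  have hdeg : (W - X ^ (n+1)).natDegree < n + 1 := by
    rcases eq_or_ne (W - X^(n+1)) 0 with h0 | h0
    · rw [h0]; simp
    · rw [natDegree_lt_iff_degree_lt h0, ← hd]
      refine lt_of_lt_of_le (degree_sub_lt ?_ hm.ne_zero ?_) degree_le_natDegree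
      · rw [degree_X_pow, Polynomial.degree_eq_natDegree hm.ne_zero, hd]
      · rw [hm.leadingCoeff, leadingCoeff_X_pow]
  rw [hW, iterate_derivative_add', Polynomial.iterate_derivative_eq_zero hdeg,
    add_zero, iterate_derivative_X_pow_eq_natCast_mul]
  rw [Nat.descFactorial_self]
  simp

lemma iteratedDeriv_polyeval (p : Polynomial ℝ) (k : ℕ) :
    iteratedDeriv k (fun x => p.eval x) = fun x => (Polynomial.derivative^[k] p).eval x := by
  induction k with
  | zero => simp
  | succ k ih =>
    rw [iteratedDeriv_succ, ih]
    funext x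
    rw [Function.iterate_succ_apply']
    exact Polynomial.deriv (p := Polynomial.derivative^[k] p)

lemma contDiff_deriv_of_succ {f : ℝ → ℝ} {k : ℕ} (hf : ContDiff ℝ (k+1) f) :
    ContDiff ℝ k (deriv f) := by
  rw [contDiff_succ_iff_deriv] at hf
  exact hf.2.2

lemma iteratedDeriv_sub' (k : ℕ) (f g : ℝ → ℝ) (hf : ContDiff ℝ k f)
    (hg : ContDiff ℝ k g) (x : ℝ) :
    iteratedDeriv k (fun y => f y - g y) x = iteratedDeriv k f x - iteratedDeriv k g x := by
  have hfg : (fun y => f y - g y) = f - g := rfl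
  rw [hfg, ← iteratedDerivWithin_univ, ← iteratedDerivWithin_univ, ← iteratedDerivWithin_univ]
  exact iteratedDerivWithin_sub (Set.mem_univ x) uniqueDiffOn_univ hf.contDiffWithinAt hg.contDiffWithinAt

lemma rolle_iterated : ∀ (k : ℕ) (f : ℝ → ℝ), ContDiff ℝ k f →
    ∀ (x : Fin (k+1) → ℝ), StrictMono x → (∀ i, f (x i) = 0) →
    ∃ ξ, iteratedDeriv k f ξ = 0 := by
  intro k
  induction k with
  | zero => intro f _ x _ hz; exact ⟨x 0, by simpa using hz 0⟩
  | succ k ih =>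
    intro f hf x hx hz
    have key : ∀ i : Fin (k+1), ∃ c ∈ Set.Ioo (x i.castSucc) (x i.succ), deriv f c = 0 := by
      intro i
      exact exists_deriv_eq_zero (hx (Fin.castSucc_lt_succ : i.castSucc < i.succ))
        (hf.continuous.continuousOn) (by rw [hz, hz])
    choose ξ hξmem hξz using key
    have hmono : StrictMono ξ := by
      rw [Fin.strictMono_iff_lt_succ]
      intro i
      calc ξ i.castSucc < x i.castSucc.succ := (hξmem i.castSucc).2
        _ ≤ x i.succ.castSucc := by
            apply hx.le_iff_le.mpr
            simp [Fin.le_def]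
        _ < ξ i.succ := (hξmem i.succ).1
    obtain ⟨c, hc⟩ := ih (deriv f) (contDiff_deriv_of_succ hf) ξ hmono (fun i => hξz i)
    exact ⟨c, by rwa [iteratedDeriv_succ']⟩

lemma prod_cast_add_one (m : ℕ) : (∏ j ∈ range m, ((j:ℝ) + 1)) = (m.factorial : ℝ) := by
  rw [← Finset.prod_range_add_one_eq_factorial m]
  push_cast
  rfl

lemma abs_prod_nodes (n m : ℕ) (hm : m ≤ n) :
    |∏ a ∈ (range (n+1)).erase m, ((m:ℝ) - a)|
      = (m.factorial : ℝ) * ((n-m).factorial : ℝ) := by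
  have hsplit : (range (n+1)).erase m = Finset.Ico 0 m ∪ Finset.Ico (m+1) (n+1) := by
    ext a
    simp only [mem_erase, mem_range, mem_union, mem_Ico]
    omega
  have hdisj : Disjoint (Finset.Ico 0 m) (Finset.Ico (m+1) (n+1)) := by
    rw [Finset.disjoint_left]
    intro a ha hb
    simp only [mem_Ico] at ha hb
    omega
  rw [hsplit, prod_union hdisj, abs_mul]
  congr 1
  · rw [show Finset.Ico 0 m = range m from by ext a; simp]
    have h1 : ∀ j ∈ range m, ((m:ℝ) - j) = (((m - 1 - j : ℕ) : ℝ) + 1) := by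
      intro j hj
      simp only [mem_range] at hj
      have : ((m - 1 - j : ℕ) : ℝ) = (m:ℝ) - 1 - j := by
        push_cast [Nat.cast_sub (by omega : j ≤ m - 1), Nat.cast_sub (by omega : 1 ≤ m)]
        ring
      rw [this]; ring
    rw [Finset.prod_congr rfl h1, Finset.prod_range_reflect (fun j => (j:ℝ) + 1) m,
      prod_cast_add_one]
    rw [abs_of_nonneg (by positivity)]
  · rw [Finset.prod_Ico_eq_prod_range]
    have h2 : ∀ j ∈ range (n + 1 - (m+1)), ((m:ℝ) - (m + 1 + j : ℕ)) = -((j:ℝ) + 1) := by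
      intro j hj; push_cast; ring
    rw [Finset.prod_congr rfl h2]
    rw [show (n + 1 - (m+1)) = n - m from by omega]
    rw [Finset.abs_prod]
    have h3 : ∀ j ∈ range (n - m), |(-((j:ℝ) + 1))| = (j:ℝ) + 1 := by
      intro j _; rw [abs_neg, abs_of_nonneg (by positivity)]
    rw [Finset.prod_congr rfl h3, prod_cast_add_one]

lemma lagrangeInterp_eq_eval (n : ℕ) (x₀ h : ℝ) (f : ℝ → ℝ) :
    lagrangeInterp n x₀ h f = fun x =>
      (Lagrange.interpolate (range (n+1)) (fun i : ℕ => x₀ + (i:ℝ) * h)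
        (fun i => f (x₀ + (i:ℝ) * h))).eval x := by
  funext x
  simp only [lagrangeInterp, lagrangeBasis, Lagrange.interpolate_apply, Lagrange.basis,
    Lagrange.basisDivisor, eval_finset_sum, eval_mul, eval_C, eval_prod, eval_sub, eval_X]
  refine Finset.sum_congr rfl fun k _ => ?_
  congr 1
  refine Finset.prod_congr rfl fun i _ => ?_
  rw [div_eq_inv_mul]

end Helpers

open Polynomial in
/-- Error bound of the order-`n` central finite-difference approximation of the first
derivative on noise-free data. -/
theorem central_fd_first_derivative_error (n : ℕ) (hn : Even n) (hpos : 0 < n)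
    (x₀ h Cu : ℝ) (hh : 0 < h) (u : ℝ → ℝ)
    (hu : ContDiff ℝ (n + 1) u)
    (hbound : ∀ x, |iteratedDeriv (n + 1) u x| ≤ Cu) :
    |deriv u (x₀ + ((n / 2 : ℕ) : ℝ) * h) -
        deriv (lagrangeInterp n x₀ h u) (x₀ + ((n / 2 : ℕ) : ℝ) * h)| ≤
      h ^ n * Cu * ((n / 2).factorial : ℝ) ^ 2 / ((n + 1).factorial : ℝ) := by
  classical
  obtain ⟨r, hr⟩ := hn
  set m : ℕ := n / 2 with hm_def
  have hmn : n = 2 * m := by omega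
  have hm_pos : 0 < m := by omega
  have hm_lt : m < n := by omega
  have hu' : ContDiff ℝ ((n+1 : ℕ) : ℕ∞) u := by exact_mod_cast hu
  set v : ℕ → ℝ := fun i => x₀ + (i:ℝ) * h with hv_def
  have hvlt : ∀ {i j : ℕ}, i < j → v i < v j := by
    intro i j hij
    simp only [hv_def]
    have : (i:ℝ) < j := by exact_mod_cast hij
    nlinarith
  have hinj : Set.InjOn v (range (n+1)) := by
    intro a _ b _ hab
    by_contra hne
    rcases Nat.lt_or_ge a b with hc | hc
    · exact absurd hab (ne_of_lt (hvlt hc))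
    · have hca : b < a := by omega
      exact absurd hab.symm (ne_of_lt (hvlt hca))
  set s : Finset ℕ := range (n+1) with hs_def
  have hms : m ∈ s := by simp only [hs_def, Finset.mem_range]; omega
  set P : ℝ[X] := Lagrange.interpolate s v (fun i => u (v i)) with hP_def
  have hPdeg : P.natDegree < n + 1 := by
    rcases eq_or_ne P 0 with h0 | h0
    · rw [h0]; simp
    · rw [Polynomial.natDegree_lt_iff_degree_lt h0]
      have hdl := Lagrange.degree_interpolate_lt (fun i => u (v i)) hinj
      simpa [hs_def, hP_def] using hdl
  have hPit : Polynomial.derivative^[n+1] P = 0 := Polynomial.iterate_derivative_eq_zero hPdeg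
  have hPnode : ∀ i ∈ s, P.eval (v i) = u (v i) := fun i hi =>
    Lagrange.eval_interpolate_at_node _ hinj hi
  have hLP : lagrangeInterp n x₀ h u = fun x => P.eval x := lagrangeInterp_eq_eval n x₀ h u
  set W : ℝ[X] := Lagrange.nodal s v with hW_def
  have hWmonic : W.Monic := Lagrange.nodal_monic
  have hWdeg : W.natDegree = n + 1 := by
    simp [hW_def, Lagrange.natDegree_nodal, hs_def]
  have hWit : Polynomial.derivative^[n+1] W = Polynomial.C ((n+1).factorial : ℝ) :=
    iterate_derivative_monic_top W n hWmonic hWdeg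
  have hWnode : ∀ i ∈ s, W.eval (v i) = 0 := fun i hi => Lagrange.eval_nodal_at_node hi
  set D : ℝ := (Polynomial.derivative W).eval (v m) with hD_def
  have hD : D = ∏ j ∈ s.erase m, (v m - v j) := by
    rw [hD_def, hW_def, Lagrange.eval_nodal_derivative_eval_node_eq hms, Lagrange.eval_nodal]
  have habsD : |D| = h ^ n * ((m.factorial : ℝ))^2 := by
    rw [hD]
    have hfac : ∀ j ∈ s.erase m, (v m - v j) = ((m:ℝ) - j) * h := by
      intro j _; simp only [hv_def]; ring
    rw [Finset.prod_congr rfl hfac, Finset.prod_mul_distrib, Finset.prod_const,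
      Finset.card_erase_of_mem hms]
    simp only [hs_def, Finset.card_range]
    rw [abs_mul, abs_pow, abs_of_pos hh, show (n + 1 - 1) = n from rfl]
    rw [show s = range (n+1) from hs_def] at *
    rw [abs_prod_nodes n m (by omega)]
    rw [show n - m = m from by omega]
    ring
  have hDpos : 0 < |D| := by rw [habsD]; positivity
  have hDne : D ≠ 0 := by intro h0; rw [h0, abs_zero] at hDpos; exact lt_irrefl 0 hDpos
  set t : ℝ := v m with ht_def
  set c : ℝ := (deriv u t - deriv (fun x => P.eval x) t) / D with hc_def
  set Q : ℝ[X] := P + Polynomial.C c * W with hQ_def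
  set ψ : ℝ → ℝ := fun x => u x - Q.eval x with hψ_def
  have hψc : ContDiff ℝ ((n+1 : ℕ) : ℕ∞) ψ := hu'.sub (contDiff_polyeval Q _)
  have hψc' : ContDiff ℝ ((n : ℕ∞)+1) ψ := by exact_mod_cast hψc
  have hψnode : ∀ i ∈ s, ψ (v i) = 0 := by
    intro i hi
    simp only [hψ_def, hQ_def, Polynomial.eval_add, Polynomial.eval_mul, Polynomial.eval_C,
      hPnode i hi, hWnode i hi, mul_zero, add_zero, sub_self]
  have hud : Differentiable ℝ u :=
    hu'.differentiable (by simp)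
  have hderivψ : ∀ x, deriv ψ x = deriv u x - (Polynomial.derivative Q).eval x := by
    intro x
    rw [hψ_def]
    rw [deriv_fun_sub (hud x) (Q.differentiableAt)]
    rw [Polynomial.deriv]
  have hψ't : deriv ψ t = 0 := by
    rw [hderivψ]
    have hQder : (Polynomial.derivative Q).eval t
        = (Polynomial.derivative P).eval t + c * D := by
      simp [hQ_def, hD_def, ht_def]
    rw [hQder]
    have hPd : deriv (fun x => P.eval x) t = (Polynomial.derivative P).eval t :=
      Polynomial.deriv (p := P)
    rw [hc_def, ← hPd, div_mul_cancel₀ _ hDne]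
    ring
  have key : ∀ i : ℕ, i < n → ∃ z ∈ Set.Ioo (v i) (v (i+1)), deriv ψ z = 0 := by
    intro i hi
    refine exists_deriv_eq_zero (hvlt (Nat.lt_succ_self i))
      hψc.continuous.continuousOn ?_
    rw [hψnode i (by simp only [hs_def, Finset.mem_range]; omega),
      hψnode (i+1) (by simp only [hs_def, Finset.mem_range]; omega)]
  choose ξ hξmem hξz using key
  set ζ : ℕ → ℝ := fun j => if hj : j < n then ξ j hj else 0 with hζ_def
  have hζmem : ∀ j, j < n → v j < ζ j ∧ ζ j < v (j+1) := by
    intro j hj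
    simp only [hζ_def, dif_pos hj]
    exact ⟨(hξmem j hj).1, (hξmem j hj).2⟩
  have hζz : ∀ j, j < n → deriv ψ (ζ j) = 0 := by
    intro j hj
    simp only [hζ_def, dif_pos hj]
    exact hξz j hj
  have hζmono : ∀ a b, a < n → b < n → a < b → ζ a < ζ b := by
    intro a b ha hb hab
    have h1 := (hζmem a ha).2
    have h2 := (hζmem b hb).1
    have h3 : v (a+1) ≤ v b := by
      rcases eq_or_lt_of_le (by omega : a + 1 ≤ b) with he | hl
      · rw [he]
      · exact le_of_lt (hvlt hl)
    linarith
  set y : Fin (n+1) → ℝ := fun i =>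
    if (i:ℕ) < m then ζ i
    else if (i:ℕ) = m then t
    else ζ ((i:ℕ) - 1) with hy_def
  have hymono : StrictMono y := by
    rw [Fin.strictMono_iff_lt_succ]
    intro i
    have e1 : (i.castSucc : ℕ) = (i : ℕ) := rfl
    have e2 : (i.succ : ℕ) = (i : ℕ) + 1 := rfl
    have hilt : (i : ℕ) < n := i.isLt
    simp only [hy_def, e1, e2]
    split_ifs with h1 h2 h3 h4 h5 h6 h7
    all_goals try omega
    · exact hζmono _ _ (by omega) (by omega) (by omega)
    · have ha := (hζmem (i:ℕ) (by omega)).2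
      have hb : v ((i:ℕ)+1) = v m := by rw [h3]
      rw [ht_def]; linarith
    · have ha := (hζmem (i:ℕ) (by omega)).1
      have hb : ((i:ℕ) + 1 - 1) = (i:ℕ) := by omega
      rw [ht_def, hb, ← h4]
      exact ha
    · have hb : ((i:ℕ) + 1 - 1) = (i:ℕ) := by omega
      rw [hb]
      exact hζmono _ _ (by omega) (by omega) (by omega)
  have hyz : ∀ i, deriv ψ (y i) = 0 := by
    intro i
    have hilt : (i : ℕ) < n + 1 := i.isLt
    simp only [hy_def]
    split_ifs with h1 h2
    · exact hζz _ (by omega)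
    · exact hψ't
    · exact hζz _ (by omega)
  obtain ⟨ρ, hρ⟩ := rolle_iterated n (deriv ψ) (contDiff_deriv_of_succ hψc') y hymono hyz
  rw [← iteratedDeriv_succ'] at hρ
  have hψit : iteratedDeriv (n+1) ψ ρ
      = iteratedDeriv (n+1) u ρ - (Polynomial.derivative^[n+1] Q).eval ρ := by
    rw [hψ_def]
    rw [iteratedDeriv_sub' (n+1) u (fun x => Q.eval x) hu' (contDiff_polyeval Q _) ρ]
    rw [congrFun (iteratedDeriv_polyeval Q (n+1)) ρ]
  have hQit : (Polynomial.derivative^[n+1] Q).eval ρ = c * ((n+1).factorial : ℝ) := by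
    rw [hQ_def, iterate_derivative_add', hPit, Polynomial.iterate_derivative_C_mul, hWit]
    simp
  have hceq : iteratedDeriv (n+1) u ρ = c * ((n+1).factorial : ℝ) := by
    have hρ' := hρ
    rw [hψit, hQit] at hρ'
    linarith
  have hfacpos : (0:ℝ) < ((n+1).factorial : ℝ) := by positivity
  have hcabs : |c| ≤ Cu / ((n+1).factorial : ℝ) := by
    rw [le_div_iff₀ hfacpos]
    calc |c| * ((n+1).factorial : ℝ) = |c * ((n+1).factorial : ℝ)| := by
          rw [abs_mul, abs_of_pos hfacpos]
      _ = |iteratedDeriv (n+1) u ρ| := by rw [hceq]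
      _ ≤ Cu := hbound ρ
  have hgoal_pt : x₀ + ((m : ℕ) : ℝ) * h = t := rfl
  rw [hLP, hgoal_pt]
  have hval : deriv u t - deriv (fun x => P.eval x) t = c * D := by
    rw [hc_def, div_mul_cancel₀ _ hDne]
  rw [hval, abs_mul, habsD]
  calc |c| * (h ^ n * ((m.factorial : ℝ))^2)
      ≤ (Cu / ((n+1).factorial : ℝ)) * (h ^ n * ((m.factorial : ℝ))^2) := by
        apply mul_le_mul_of_nonneg_right hcabs (by positivity)
    _ = h ^ n * Cu * ((m.factorial : ℝ))^2 / ((n+1).factorial : ℝ) := by ring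
end
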